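/- A permutation is sortable by one pass through a deterministic pop stack if and only if it avoids both patterns 231 and 312. -/

import Mathlib

/-- One pass through a deterministic pop stack, with explicit stack
(head of `stack` is the top; the stack is increasing from top to bottom). -/
def p1Aux : List ℤ → List ℤ → List ℤ
  | stack, [] => stack
  | [], x :: xs => p1Aux [x] xs
  | t :: ts, x :: xs =>
    if t < x then (t :: ts) ++ p1Aux [x] xs else p1Aux (x :: t :: ts) xs

/-- One pass of a permutation through a deterministic pop stack. -/
def p1 (σ : List ℤ) : List ℤ := p1Aux [] σ

/-- Two lists (of the same length) are order-isomorphic. -/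
def OrdIso (a b : List ℤ) : Prop :=
  a.length = b.length ∧
    ∀ i j (hia : i < a.length) (hja : j < a.length) (hib : i < b.length)
      (hjb : j < b.length),
      (a.get ⟨i, hia⟩ < a.get ⟨j, hja⟩ ↔ b.get ⟨i, hib⟩ < b.get ⟨j, hjb⟩)

/-- `PContains β α` : β contains the pattern α. -/
def PContains (β α : List ℤ) : Prop := ∃ γ, γ.Sublist β ∧ OrdIso γ α

/-- A reduced permutation of length n is a rearrangement of 1,2,…,n. -/
def Reduced (σ : List ℤ) : Prop :=
  σ.Perm ((List.range σ.length).map fun i => (i : ℤ) + 1)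

/-- σ 2-contains the pair (F, G). -/
def Contains2 (σ : List ℤ) (F G : Set (List ℤ)) : Prop :=
  ∃ γ, γ.Sublist σ ∧ (∃ f ∈ F, OrdIso γ f) ∧
    ¬ ∃ δ, δ.Sublist σ ∧ γ.Sublist δ ∧ ∃ g ∈ G, OrdIso δ g

/-- The set of reduced permutations 2-avoiding (F, G). -/
def Av2 (F G : Set (List ℤ)) : Set (List ℤ) :=
  {σ | Reduced σ ∧ ¬ Contains2 σ F G}

/-- `Bs` is the maximal block decomposition of σ: nonempty strictly
decreasing blocks, with the last entry of each block smaller than the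
first entry of the next. -/
def IsBlockDecomp (σ : List ℤ) (Bs : List (List ℤ)) : Prop :=
  σ = Bs.flatten ∧ (∀ B ∈ Bs, B ≠ [] ∧ B.Pairwise (· > ·)) ∧
    Bs.Chain' (fun B C => ∀ x ∈ B.getLast?, ∀ y ∈ C.head?, x < y)

/-!
The pop stack pushes each maximal decreasing run of `σ` and pops it, reversed, as soon as the
next entry is larger; so `p1 (r ++ t) = r.reverse ++ p1 t` when `r` is the first run. The output
is therefore increasing iff every run lies below everything after it. A 231/312-avoiding `σ` has
this property: if `m` is the last entry of the first run and `x` the entry after it, a later entry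
`b < m` would give the 231 `m x b`, and an earlier entry `a` of the run with `m < b < a` would give
the 312 `a m b`. Conversely a pattern 231 or 312 cannot straddle two such layers, and cannot lie
in one decreasing run.
-/

def Has231 (σ : List ℤ) : Prop :=
  ∃ u v w : ℤ, [u, v, w].Sublist σ ∧ w < u ∧ u < v

def Has312 (σ : List ℤ) : Prop :=
  ∃ u v w : ℤ, [u, v, w].Sublist σ ∧ v < w ∧ w < u

lemma pContains_iff_of_length_eq_three {σ p : List ℤ} (hp : p.length = 3) :
    PContains σ p ↔ ∃ u v w : ℤ, [u, v, w].Sublist σ ∧ OrdIso [u, v, w] p := by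
  constructor
  · rintro ⟨γ, hγ, hiso⟩
    match γ, hiso.1.trans hp with
    | [u, v, w], _ => exact ⟨u, v, w, hγ, hiso⟩
  · rintro ⟨u, v, w, hsub, hiso⟩
    exact ⟨_, hsub, hiso⟩

lemma pContains_231_iff (σ : List ℤ) : PContains σ [2, 3, 1] ↔ Has231 σ := by
  rw [pContains_iff_of_length_eq_three rfl]
  refine exists₃_congr fun u v w => and_congr_right fun _ => ⟨?_, ?_⟩
  · rintro ⟨-, h⟩
    exact ⟨(h 2 0 (by simp) (by simp) (by simp) (by simp)).2 (by decide),
      (h 0 1 (by simp) (by simp) (by simp) (by simp)).2 (by decide)⟩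
  · rintro ⟨hwu, huv⟩
    refine ⟨rfl, fun i j hi hj _ _ => ?_⟩
    simp only [List.length_cons, List.length_nil] at hi hj
    interval_cases i <;> interval_cases j <;> simp <;> omega

lemma pContains_312_iff (σ : List ℤ) : PContains σ [3, 1, 2] ↔ Has312 σ := by
  rw [pContains_iff_of_length_eq_three rfl]
  refine exists₃_congr fun u v w => and_congr_right fun _ => ⟨?_, ?_⟩
  · rintro ⟨-, h⟩
    exact ⟨(h 1 2 (by simp) (by simp) (by simp) (by simp)).2 (by decide),
      (h 2 0 (by simp) (by simp) (by simp) (by simp)).2 (by decide)⟩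
  · rintro ⟨hvw, hwu⟩
    refine ⟨rfl, fun i j hi hj _ _ => ?_⟩
    simp only [List.length_cons, List.length_nil] at hi hj
    interval_cases i <;> interval_cases j <;> simp <;> omega

lemma Has231.mono {τ σ : List ℤ} (h : Has231 τ) (hτ : τ.Sublist σ) : Has231 σ :=
  let ⟨u, v, w, hs, huv⟩ := h
  ⟨u, v, w, hs.trans hτ, huv⟩

lemma Has312.mono {τ σ : List ℤ} (h : Has312 τ) (hτ : τ.Sublist σ) : Has312 σ :=
  let ⟨u, v, w, hs, huv⟩ := h
  ⟨u, v, w, hs.trans hτ, huv⟩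

lemma not_has231_of_pairwise_gt {r : List ℤ} (hr : r.Pairwise (· > ·)) : ¬Has231 r := by
  rintro ⟨u, v, w, hs, -, huv⟩
  have : u > v := List.pairwise_pair.1 (hr.sublist ((List.sublist_append_left [u, v] [w]).trans hs))
  omega

lemma not_has312_of_pairwise_gt {r : List ℤ} (hr : r.Pairwise (· > ·)) : ¬Has312 r := by
  rintro ⟨u, v, w, hs, hvw, -⟩
  have : v > w := List.pairwise_pair.1 (hr.sublist ((List.sublist_cons_self u [v, w]).trans hs))
  omega

lemma triple_sublist_append {u v w : ℤ} {r t : List ℤ} (h : [u, v, w].Sublist (r ++ t)) :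
    [u, v, w].Sublist r ∨ [u, v, w].Sublist t ∨ (u ∈ r ∧ w ∈ t) := by
  obtain ⟨l₁, l₂, heq, h₁, h₂⟩ := List.sublist_append_iff.1 h
  rcases l₁ with _ | ⟨a, _ | ⟨b, _ | ⟨c, _ | ⟨d, l₁⟩⟩⟩⟩ <;>
    simp only [List.cons_append, List.nil_append, List.cons.injEq, List.nil_eq, reduceCtorEq,
      and_false] at heq
  · exact Or.inr (Or.inl (heq ▸ h₂))
  · obtain ⟨rfl, rfl⟩ := heq
    exact Or.inr (Or.inr ⟨h₁.subset (by simp), h₂.subset (by simp)⟩)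
  · obtain ⟨rfl, rfl, rfl⟩ := heq
    exact Or.inr (Or.inr ⟨h₁.subset (by simp), h₂.subset (by simp)⟩)
  · obtain ⟨rfl, rfl, rfl, rfl⟩ := heq
    exact Or.inl (by simpa using h₁)

lemma Has231.of_append {r t : List ℤ} (h : Has231 (r ++ t)) (hrt : ∀ a ∈ r, ∀ b ∈ t, a < b) :
    Has231 r ∨ Has231 t := by
  obtain ⟨u, v, w, hs, hwu, huv⟩ := h
  rcases triple_sublist_append hs with hs | hs | ⟨hu, hw⟩
  · exact Or.inl ⟨u, v, w, hs, hwu, huv⟩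
  · exact Or.inr ⟨u, v, w, hs, hwu, huv⟩
  · exact absurd (hrt u hu w hw) hwu.not_gt

lemma Has312.of_append {r t : List ℤ} (h : Has312 (r ++ t)) (hrt : ∀ a ∈ r, ∀ b ∈ t, a < b) :
    Has312 r ∨ Has312 t := by
  obtain ⟨u, v, w, hs, hvw, hwu⟩ := h
  rcases triple_sublist_append hs with hs | hs | ⟨hu, hw⟩
  · exact Or.inl ⟨u, v, w, hs, hvw, hwu⟩
  · exact Or.inr ⟨u, v, w, hs, hvw, hwu⟩
  · exact absurd (hrt u hu w hw) hwu.not_gt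

lemma forall_lt_of_not_has231_of_not_has312 {r t : List ℤ} (hnd : (r ++ t).Nodup)
    (hbd : ∀ x ∈ r.getLast?, ∀ y ∈ t.head?, x < y)
    (h231 : ¬Has231 (r ++ t)) (h312 : ¬Has312 (r ++ t)) :
    ∀ a ∈ r, ∀ b ∈ t, a < b := by
  have hne := (List.nodup_append.1 hnd).2.2
  rcases r.eq_nil_or_concat' with rfl | ⟨r, m, rfl⟩
  · simp
  rcases t with _ | ⟨x, t⟩
  · simp
  have hmx : m < x := hbd m (by simp) x (by simp)
  have hm : ∀ b ∈ x :: t, m < b := by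
    intro b hb
    rcases List.mem_cons.1 hb with rfl | hb
    · exact hmx
    refine lt_of_le_of_ne (not_lt.1 fun hbm => h231 ⟨m, x, b, ?_, hbm, hmx⟩)
      (hne m (by simp) b (.tail x hb))
    exact (List.sublist_append_right r [m]).append ((List.singleton_sublist.2 hb).cons_cons x)
  intro a ha b hb
  rcases List.mem_append.1 ha with ha | ha
  · refine lt_of_le_of_ne (not_lt.1 fun hba => h312 ⟨a, m, b, ?_, hm b hb, hba⟩)
      (hne a (by simp [ha]) b hb)
    exact ((List.singleton_sublist.2 ha).append (List.Sublist.refl [m])).append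
      (List.singleton_sublist.2 hb)
  · obtain rfl := List.mem_singleton.1 ha
    exact hm b hb

lemma not_has231_and_not_has312_append_iff {r t : List ℤ} (hr : r.IsChain (· > ·))
    (hnd : (r ++ t).Nodup) (hbd : ∀ x ∈ r.getLast?, ∀ y ∈ t.head?, x < y) :
    ¬Has231 (r ++ t) ∧ ¬Has312 (r ++ t) ↔ (∀ a ∈ r, ∀ b ∈ t, a < b) ∧ ¬Has231 t ∧ ¬Has312 t := by
  constructor
  · rintro ⟨h231, h312⟩
    exact ⟨forall_lt_of_not_has231_of_not_has312 hnd hbd h231 h312,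
      fun h => h231 (h.mono (List.sublist_append_right r t)),
      fun h => h312 (h.mono (List.sublist_append_right r t))⟩
  · rintro ⟨hrt, h231, h312⟩
    exact ⟨fun h => (h.of_append hrt).elim (not_has231_of_pairwise_gt hr.pairwise) h231,
      fun h => (h.of_append hrt).elim (not_has312_of_pairwise_gt hr.pairwise) h312⟩

lemma p1Aux_perm (s xs : List ℤ) : (p1Aux s xs).Perm (s ++ xs) := by
  fun_induction p1Aux s xs with
  | case1 => simp
  | case2 x xs ih => simpa using ih
  | case3 t ts x xs hlt ih => simpa using ih.append_left (t :: ts)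
  | case4 t ts x xs hlt ih => exact ih.trans List.perm_middle.symm

lemma p1_perm (σ : List ℤ) : (p1 σ).Perm σ := p1Aux_perm [] σ

lemma p1Aux_append_of_isChain {a : ℤ} {r : List ℤ} (hr : (a :: r).IsChain (· > ·))
    (s rest : List ℤ) : p1Aux (a :: s) (r ++ rest) = p1Aux (r.reverse ++ a :: s) rest := by
  induction r generalizing a s with
  | nil => rfl
  | cons b r ih =>
    rw [List.isChain_cons_cons] at hr
    simp [p1Aux, hr.1.not_gt, ih hr.2]

lemma p1_append_of_isChain {r t : List ℤ} (hr : r.IsChain (· > ·))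
    (hbd : ∀ x ∈ r.getLast?, ∀ y ∈ t.head?, x < y) : p1 (r ++ t) = r.reverse ++ p1 t := by
  rcases r with _ | ⟨a, r⟩
  · simp
  have hpush : p1 (a :: r ++ t) = p1Aux (a :: r).reverse t := by
    rw [List.reverse_cons]
    exact p1Aux_append_of_isChain hr [] t
  obtain ⟨m, s, hms⟩ : ∃ m s, (a :: r).reverse = m :: s :=
    List.exists_cons_of_ne_nil (by simp)
  have hm : m ∈ (a :: r).getLast? := by simp [← List.head?_reverse, hms]
  rw [hpush, hms]
  rcases t with _ | ⟨y, t⟩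
  · simp [p1Aux, p1]
  · simp [p1Aux, p1, hbd m hm y (by simp)]

lemma exists_decreasing_run_append {σ : List ℤ} (hσ : σ.Nodup) (hne : σ ≠ []) :
    ∃ r t, σ = r ++ t ∧ r ≠ [] ∧ r.IsChain (· > ·) ∧
      ∀ x ∈ r.getLast?, ∀ y ∈ t.head?, x < y := by
  induction σ with
  | nil => exact absurd rfl hne
  | cons a l ih =>
    rcases l with _ | ⟨b, l⟩
    · exact ⟨[a], [], by simp⟩
    by_cases hba : b < a
    · obtain ⟨r, t, hl, hr, hrun, hbd⟩ := ih hσ.of_cons (by simp)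
      have hhead : r.head? = some b := by rw [← List.head?_append_of_ne_nil r hr, ← hl]; rfl
      refine ⟨a :: r, t, by simp [hl], by simp, List.isChain_cons.2 ⟨by simpa [hhead], hrun⟩, ?_⟩
      rwa [List.getLast?_cons_of_ne_nil hr]
    · have hab : a ≠ b := fun h => (List.nodup_cons.1 hσ).1 (h ▸ List.mem_cons_self)
      exact ⟨[a], b :: l, rfl, by simp, by simp, by simpa using lt_of_le_of_ne (not_lt.1 hba) hab⟩

theorem p1_pairwise_lt_iff {σ : List ℤ} (hσ : σ.Nodup) :
    (p1 σ).Pairwise (· < ·) ↔ ¬Has231 σ ∧ ¬Has312 σ := by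
  induction h : σ.length using Nat.strong_induction_on generalizing σ with
  | _ n ih =>
    rcases eq_or_ne σ [] with rfl | hne
    · simp [p1, p1Aux, Has231, Has312]
    obtain ⟨r, t, rfl, hr, hrun, hbd⟩ := exists_decreasing_run_append hσ hne
    have ht : (p1 t).Pairwise (· < ·) ↔ ¬Has231 t ∧ ¬Has312 t :=
      ih t.length (by simp [← h, List.length_pos_iff.2 hr]) (List.nodup_append.1 hσ).2.1 rfl
    rw [not_has231_and_not_has312_append_iff hrun hσ hbd, ← ht, p1_append_of_isChain hrun hbd,
      List.pairwise_append, List.pairwise_reverse]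
    simp only [List.mem_reverse, (p1_perm t).mem_iff, hrun.pairwise, true_and]
    exact and_comm

/-- a permutation is sortable by one pass through a
deterministic pop stack iff it avoids 231 and 312. -/
theorem stmt_3 (σ : List ℤ) (hσ : σ.Nodup) :
    (p1 σ).Pairwise (· < ·) ↔
      ¬ PContains σ [2, 3, 1] ∧ ¬ PContains σ [3, 1, 2] := by
  rw [p1_pairwise_lt_iff hσ, pContains_231_iff, pContains_312_iff]
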